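/- Let μ be a probability measure on ℕ and let k ≥ 1 be a natural number such that the function n ↦ n^k is integrable with respect to μ. Then ∫ n^k dμ(n) = ∑_{m=1}^{k} S(k,m) · ∑'_{M ≥ 1} C(M-1, m-1) · μ({n : n ≥ M}). -/

import Mathlib

open Finset MeasureTheory

/-- `S k m` is the number of surjections from a `k`-element set onto an `m`-element set. -/
noncomputable def surjCount (k m : ℕ) : ℕ :=
  Nat.card {f : Fin k → Fin m // Function.Surjective f}

lemma surjCount_zero {k : ℕ} (hk : 1 ≤ k) : surjCount k 0 = 0 := by
  have : IsEmpty {f : Fin k → Fin 0 // Function.Surjective f} :=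
    ⟨fun ⟨f, _⟩ => (f ⟨0, hk⟩).elim0⟩
  simp [surjCount, Nat.card_of_isEmpty]

lemma surjCount_of_lt {k m : ℕ} (h : k < m) : surjCount k m = 0 := by
  have : IsEmpty {f : Fin k → Fin m // Function.Surjective f} := by
    refine ⟨fun ⟨f, hf⟩ => ?_⟩
    have := Fintype.card_le_of_surjective f hf
    simp only [Fintype.card_fin] at this
    omega
  simp [surjCount, Nat.card_of_isEmpty]

lemma card_surj_eq (k : ℕ) (α : Type*) [Fintype α] :
    Nat.card {f : Fin k → α // Function.Surjective f} = surjCount k (Fintype.card α) := by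
  apply Nat.card_congr
  refine Equiv.subtypeEquiv (Equiv.arrowCongr (Equiv.refl (Fin k)) (Fintype.equivFin α))
    (fun f => ⟨fun hf y => ?_, fun hf y => ?_⟩)
  · obtain ⟨x, hx⟩ := hf ((Fintype.equivFin α).symm y)
    refine ⟨x, ?_⟩
    simp [Equiv.arrowCongr_apply, Function.comp, hx]
  · obtain ⟨x, hx⟩ := hf ((Fintype.equivFin α) y)
    refine ⟨x, (Fintype.equivFin α).injective ?_⟩
    simpa [Equiv.arrowCongr_apply, Function.comp] using hx

lemma card_fiber (k n : ℕ) (s : Finset (Fin n)) :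
    Nat.card {f : Fin k → Fin n // Finset.image f Finset.univ = s} = surjCount k s.card := by
  rw [← Fintype.card_coe s, ← card_surj_eq]
  apply Nat.card_congr
  refine ⟨fun f => ⟨fun x => ⟨f.1 x, (Finset.ext_iff.1 f.2 (f.1 x)).1 (mem_image_of_mem f.1 (mem_univ x))⟩, ?_⟩,
          fun g => ⟨fun x => (g.1 x : Fin n), ?_⟩, fun f => Subtype.ext rfl,
          fun g => Subtype.ext (funext fun x => Subtype.ext rfl)⟩
  · rintro ⟨y, hy⟩
    rw [← f.2] at hy
    obtain ⟨x, -, hx⟩ := mem_image.1 hy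
    exact ⟨x, Subtype.ext hx⟩
  · ext y
    simp only [mem_image, mem_univ, true_and]
    constructor
    · rintro ⟨x, rfl⟩; exact (g.1 x).2
    · intro hy
      obtain ⟨x, hx⟩ := g.2 ⟨y, hy⟩
      exact ⟨x, congrArg Subtype.val hx⟩

lemma pow_eq_sum_surjCount {k : ℕ} (hk : 1 ≤ k) (n : ℕ) :
    n ^ k = ∑ m ∈ Finset.Icc 1 k, surjCount k m * n.choose m := by
  classical
  have h1 : n ^ k = Fintype.card (Fin k → Fin n) := by simp
  have h2 : (Finset.univ : Finset (Fin k → Fin n)).card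
      = ∑ s ∈ (Finset.univ : Finset (Fin n)).powerset,
          (Finset.univ.filter (fun f : Fin k → Fin n => Finset.image f Finset.univ = s)).card :=
    Finset.card_eq_sum_card_fiberwise (fun f _ => Finset.mem_powerset.2 (subset_univ _))
  have h3 : ∀ s : Finset (Fin n),
      (Finset.univ.filter (fun f : Fin k → Fin n => Finset.image f Finset.univ = s)).card
        = surjCount k s.card := by
    intro s
    rw [← Fintype.card_subtype, ← Nat.card_eq_fintype_card]
    exact card_fiber k n s
  have h4 : n ^ k = ∑ m ∈ Finset.range (n + 1), n.choose m * surjCount k m := by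
    rw [h1, Fintype.card, h2]
    simp only [h3]
    rw [Finset.sum_powerset_apply_card (surjCount k)]
    simp [card_univ]
  have e1 : ∑ m ∈ Finset.range (n + 1), n.choose m * surjCount k m
      = ∑ m ∈ Finset.range (n + k + 1), n.choose m * surjCount k m := by
    apply Finset.sum_subset (Finset.range_subset_range.2 (by omega))
    intro x _ hx
    rw [Nat.choose_eq_zero_of_lt (by simp at hx; omega), zero_mul]
  have e2 : ∑ m ∈ Finset.Icc 1 k, surjCount k m * n.choose m
      = ∑ m ∈ Finset.range (n + k + 1), surjCount k m * n.choose m := by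
    apply Finset.sum_subset
    · intro x hx; simp only [Finset.mem_Icc] at hx; simp only [Finset.mem_range]; omega
    · intro x _ hx
      simp only [Finset.mem_Icc, not_and_or, not_le] at hx
      rcases hx with hx | hx
      · interval_cases x
        rw [surjCount_zero hk, zero_mul]
      · rw [surjCount_of_lt hx, zero_mul]
  rw [h4, e1, e2]
  exact Finset.sum_congr rfl fun m _ => mul_comm _ _

lemma sum_range_choose_eq (n t : ℕ) : ∑ j ∈ Finset.range n, j.choose t = n.choose (t + 1) := by
  induction n with
  | zero => simp
  | succ n ih => rw [Finset.sum_range_succ, ih, Nat.choose_succ_succ, add_comm]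

lemma tsum_subtype_one_le (f : ℕ → ENNReal) :
    ∑' M : {M : ℕ // 1 ≤ M}, f (M : ℕ) = ∑' j : ℕ, f (j + 1) :=
  (Equiv.tsum_eq (⟨fun j => ⟨j + 1, Nat.le_add_left 1 j⟩, fun M => M.1 - 1,
    fun j => by simp, fun M => Subtype.ext (Nat.succ_pred_eq_of_pos M.2)⟩ :
      ℕ ≃ {M : ℕ // 1 ≤ M}) (fun M => f (M : ℕ))).symm

open ENNReal in
lemma tail_sum (μ : Measure ℕ) {m : ℕ} (hm : 1 ≤ m) :
    ∑' M : {M : ℕ // 1 ≤ M},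
        ((((M : ℕ) - 1).choose (m - 1) : ℝ≥0∞)) * μ {n | (M : ℕ) ≤ n}
      = ∑' n : ℕ, (n.choose m : ℝ≥0∞) * μ {n} := by
  rw [tsum_subtype_one_le (fun M => (((M - 1).choose (m - 1) : ℝ≥0∞)) * μ {n | M ≤ n})]
  simp only [Nat.add_sub_cancel]
  have key : ∀ j : ℕ, μ {n | j + 1 ≤ n}
      = ∑' n : ℕ, Set.indicator {n | j + 1 ≤ n} (fun n => μ {n}) n :=
    fun j => (μ.tsum_indicator_apply_singleton _ (MeasurableSet.of_discrete)).symm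
  calc ∑' j : ℕ, ((j.choose (m - 1) : ℝ≥0∞)) * μ {n | j + 1 ≤ n}
      = ∑' j : ℕ, ∑' n : ℕ,
          ((j.choose (m - 1) : ℝ≥0∞)) * Set.indicator {n | j + 1 ≤ n} (fun n => μ {n}) n := by
        refine tsum_congr fun j => ?_
        rw [ENNReal.tsum_mul_left, ← key j]
    _ = ∑' n : ℕ, ∑' j : ℕ,
          ((j.choose (m - 1) : ℝ≥0∞)) * Set.indicator {n | j + 1 ≤ n} (fun n => μ {n}) n :=
        ENNReal.tsum_comm
    _ = ∑' n : ℕ, (n.choose m : ℝ≥0∞) * μ {n} := by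
        refine tsum_congr fun n => ?_
        have h : ∀ j : ℕ, ((j.choose (m - 1) : ℝ≥0∞)) *
            Set.indicator {n' | j + 1 ≤ n'} (fun n' => μ {n'}) n
            = if j < n then ((j.choose (m - 1) : ℝ≥0∞)) * μ {n} else 0 := by
          intro j
          rw [Set.indicator_apply]
          by_cases hj : j + 1 ≤ n
          · rw [if_pos (show n ∈ {n' | j + 1 ≤ n'} from hj), if_pos (by omega)]
          · rw [if_neg (show n ∉ {n' | j + 1 ≤ n'} from hj), if_neg (by omega), mul_zero]
        simp only [h]
        rw [tsum_eq_sum (s := Finset.range n) (fun j hj => by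
          rw [if_neg]; simpa using hj)]
        rw [Finset.sum_congr rfl (fun j hj => if_pos (Finset.mem_range.1 hj)),
          ← Finset.sum_mul]
        congr 1
        rw [← Nat.cast_sum, sum_range_choose_eq]
        congr 2
        omega

theorem count_moment_upper_tail (μ : Measure ℕ) [IsProbabilityMeasure μ]
    (k : ℕ) (hk : 1 ≤ k) (hint : Integrable (fun n : ℕ => (n : ℝ) ^ k) μ) :
    (∫ n, (n : ℝ) ^ k ∂μ) =
      ∑ m ∈ Finset.Icc 1 k,
        (surjCount k m : ℝ) *
          ∑' M : {M : ℕ // 1 ≤ M},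
            (Nat.choose ((M : ℕ) - 1) (m - 1) : ℝ) * (μ {n | (M : ℕ) ≤ n}).toReal := by
  have hL : ∫ n, (n : ℝ) ^ k ∂μ = (∫⁻ n, ((n : ℕ) : ENNReal) ^ k ∂μ).toReal := by
    rw [integral_eq_lintegral_of_nonneg_ae (ae_of_all _ fun n => by positivity)
      hint.aestronglyMeasurable]
    congr 1
    refine lintegral_congr fun n => ?_
    rw [ENNReal.ofReal_pow (Nat.cast_nonneg n), ENNReal.ofReal_natCast]
  set A : ℕ → ENNReal := fun m => (surjCount k m : ENNReal) *
    ∑' M : {M : ℕ // 1 ≤ M},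
      ((((M : ℕ) - 1).choose (m - 1) : ENNReal)) * μ {n | (M : ℕ) ≤ n} with hA
  have hmain : ∫⁻ n, ((n : ℕ) : ENNReal) ^ k ∂μ = ∑ m ∈ Finset.Icc 1 k, A m := by
    rw [lintegral_countable']
    calc ∑' n : ℕ, ((n : ENNReal)) ^ k * μ {n}
        = ∑' n : ℕ, ∑ m ∈ Finset.Icc 1 k,
            (surjCount k m : ENNReal) * ((n.choose m : ENNReal) * μ {n}) := by
          refine tsum_congr fun n => ?_
          have h := pow_eq_sum_surjCount hk n
          calc ((n : ENNReal)) ^ k * μ {n}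
              = ((n ^ k : ℕ) : ENNReal) * μ {n} := by push_cast; ring
            _ = _ := by
                rw [h]
                push_cast
                rw [Finset.sum_mul]
                exact Finset.sum_congr rfl fun m _ => by ring
      _ = ∑ m ∈ Finset.Icc 1 k, ∑' n : ℕ,
            (surjCount k m : ENNReal) * ((n.choose m : ENNReal) * μ {n}) :=
          (Summable.tsum_finsetSum (f := fun (m : ℕ) (n : ℕ) =>
            (surjCount k m : ENNReal) * ((n.choose m : ENNReal) * μ {n}))
            (s := Finset.Icc 1 k) fun i _ => ENNReal.summable)
      _ = ∑ m ∈ Finset.Icc 1 k, A m := by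
          refine Finset.sum_congr rfl fun m hm => ?_
          rw [ENNReal.tsum_mul_left, ← tail_sum μ (Finset.mem_Icc.1 hm).1]
  have hfin : ∫⁻ n, ((n : ℕ) : ENNReal) ^ k ∂μ ≠ ⊤ := by
    have h2 := (hasFiniteIntegral_iff_ofReal (ae_of_all _ fun n => by positivity)).1 hint.2
    refine ne_of_lt (lt_of_eq_of_lt ?_ h2)
    exact lintegral_congr fun n => by
      rw [ENNReal.ofReal_pow (Nat.cast_nonneg n), ENNReal.ofReal_natCast]
  have hAfin : ∀ m ∈ Finset.Icc 1 k, A m ≠ ⊤ := fun m hm =>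
    ne_top_of_le_ne_top (hmain ▸ hfin) (Finset.single_le_sum (fun i _ => zero_le) hm)
  rw [hL, hmain, ENNReal.toReal_sum hAfin]
  refine Finset.sum_congr rfl fun m hm => ?_
  rw [hA, ENNReal.toReal_mul, ENNReal.toReal_natCast]
  congr 1
  rw [ENNReal.tsum_toReal_eq
    (fun M => ENNReal.mul_ne_top (ENNReal.natCast_ne_top _) (measure_ne_top μ _))]
  exact tsum_congr fun M => by rw [ENNReal.toReal_mul, ENNReal.toReal_natCast]
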